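/- If G is a permutation graph on n vertices, then the threshold dimension of G satisfies t(G) ≤ min(α(G), n − α(G)), where α(G) is the cardinality of a maximum independent set of G. -/

import Mathlib

/-- The permutation graph `G[Π]` on `Fin n`: `i ~ j` iff `(i-j)(Π⁻¹ i - Π⁻¹ j) < 0`. -/
def permGraph (n : ℕ) (π : Equiv.Perm (Fin n)) : SimpleGraph (Fin n) where
  Adj i j := ((i : ℤ) - (j : ℤ)) * ((π.symm i : ℤ) - ((π.symm j : ℤ))) < 0
  symm := by
    constructor
    intro i j h
    have e : ((j : ℤ) - (i : ℤ)) * ((π.symm j : ℤ) - (π.symm i : ℤ))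
        = ((i : ℤ) - (j : ℤ)) * ((π.symm i : ℤ) - (π.symm j : ℤ)) := by ring
    simp only [e]
    exact h
  loopless := by constructor; intro i; simp

/-- A set of vertices is stable (independent) if no two of its members are adjacent. -/
def IsStableSet {V : Type*} (G : SimpleGraph V) (s : Set V) : Prop :=
  s.Pairwise fun a b => ¬ G.Adj a b

/-- A finite graph is a threshold graph if there are nonnegative vertex weights and a
threshold `t` such that a set of vertices is stable iff its total weight is at most `t`. -/
def IsThresholdGraph {V : Type*} [Fintype V] (G : SimpleGraph V) : Prop :=
  ∃ (w : V → ℝ) (t : ℝ), (∀ v, 0 ≤ w v) ∧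
    ∀ U : Finset V, ((∑ v ∈ U, w v) ≤ t ↔ IsStableSet G ↑U)

/-- A graph is a permutation graph if it is isomorphic to `permGraph n π` for some
permutation `π` of `Fin n`. -/
def IsPermutationGraph {V : Type*} (G : SimpleGraph V) : Prop :=
  ∃ (n : ℕ) (π : Equiv.Perm (Fin n)), Nonempty (G ≃g permGraph n π)

/-- The threshold dimension of `G`: the least `k` such that the edge set of `G` is the
union of the edge sets of `k` threshold graphs on `V(G)`. -/
noncomputable def thresholdDim {V : Type*} [Fintype V] (G : SimpleGraph V) : ℕ :=
  sInf {k | ∃ T : Fin k → SimpleGraph V,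
    (∀ i, IsThresholdGraph (T i)) ∧ (⋃ i, (T i).edgeSet) = G.edgeSet}

/-- The independence number `α(G)`. -/
noncomputable def alphaNum {V : Type*} [Fintype V] (G : SimpleGraph V) : ℕ :=
  sSup {k | ∃ s : Finset V, s.card = k ∧ IsStableSet G ↑s}

/-- The graph `mK₂`: a perfect matching on `2m` vertices. -/
def matchingGraph (m : ℕ) : SimpleGraph (Fin m × Bool) where
  Adj a b := a.1 = b.1 ∧ a.2 ≠ b.2
  symm := by constructor; rintro a b ⟨h1, h2⟩; exact ⟨h1.symm, h2.symm⟩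
  loopless := by constructor; rintro a ⟨h1, h2⟩; exact h2 rfl

/-!
Both bounds come from covering the edges of `G` by split graphs of one shape: a clique `C`, a
stable set outside it, and edges between the two such that the neighbourhoods of the outside
vertices are nested. Such a graph is a threshold graph: an outside vertex gets weight
`(N + 1) ^ degree`, which exceeds the total weight of all outside vertices of smaller degree, and a
vertex `c ∈ C` gets the threshold minus the total weight of its outside non-neighbours.

For `n - α(G)`, the complement of a maximum stable set is a vertex cover, and the stars at its
vertices cover the edges. For `α(G)`, a permutation graph is represented by two linear orders `x`,
`y` in which adjacency means crossing, so stable sets are chains of the dominance order. The height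
of a vertex (the largest stable set below it) takes at most `α(G)` values, each level is a clique,
and a level together with its edges to the vertices to its lower right is a split graph as above.
-/

section Threshold

variable {V : Type*} [Fintype V]

lemma isThresholdGraph_of_weights (T : SimpleGraph V) (w : V → ℕ) (t : ℕ)
    (hadj : ∀ a b, T.Adj a b → t < w a + w b)
    (hstable : ∀ U : Finset V, IsStableSet T ↑U → ∑ v ∈ U, w v ≤ t) :
    IsThresholdGraph T := by
  classical
  refine ⟨fun v => w v, t, fun v => Nat.cast_nonneg _, fun U => ?_⟩
  rw [← Nat.cast_sum, Nat.cast_le]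
  refine ⟨fun hle a ha b hb hab hab' => ?_, hstable U⟩
  have hpair : ∑ v ∈ {a, b}, w v ≤ ∑ v ∈ U, w v :=
    Finset.sum_le_sum_of_subset (Finset.insert_subset ha (Finset.singleton_subset_iff.2 hb))
  rw [Finset.sum_pair hab] at hpair
  have := hadj a b hab'
  omega

lemma sum_pow_lt_pow_of_card_lt {ι : Type*} (s : Finset ι) (f : ι → ℕ) {b k : ℕ}
    (hs : s.card < b) (hf : ∀ i ∈ s, f i < k) : ∑ i ∈ s, b ^ f i < b ^ k := by
  obtain _ | m := k
  · obtain rfl : s = ∅ := Finset.eq_empty_of_forall_notMem fun i hi => by simpa using hf i hi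
    simp
  calc ∑ i ∈ s, b ^ f i ≤ s.card • b ^ m :=
        Finset.sum_le_card_nsmul _ _ _ fun i hi =>
          Nat.pow_le_pow_right (by omega) (Nat.lt_succ_iff.1 (hf i hi))
    _ < b * b ^ m := Nat.mul_lt_mul_of_pos_right hs (Nat.pow_pos (by omega))
    _ = b ^ (m + 1) := (pow_succ' b m).symm

lemma SimpleGraph.degree_lt_degree_of_neighborSet_ssubset (T : SimpleGraph V)
    [DecidableRel T.Adj] {u v : V} (h : T.neighborSet u ⊂ T.neighborSet v) :
    T.degree u < T.degree v := by
  rw [← T.card_neighborFinset_eq_degree, ← T.card_neighborFinset_eq_degree]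
  exact Finset.card_lt_card (Set.toFinset_ssubset_toFinset.2 h)

theorem isThresholdGraph_of_nested (T : SimpleGraph V) (C : Set V) (hC : T.IsClique C)
    (hI : ∀ u ∉ C, ∀ v ∉ C, ¬ T.Adj u v)
    (hnest : ∀ u ∉ C, ∀ v ∉ C,
      T.neighborSet u ⊆ T.neighborSet v ∨ T.neighborSet v ⊆ T.neighborSet u) :
    IsThresholdGraph T := by
  classical
  let wI : V → ℕ := fun u => (Fintype.card V + 1) ^ T.degree u
  let S : V → ℕ := fun c =>
    ∑ u ∈ Finset.univ.filter (fun u => u ∉ C ∧ ¬ T.Adj u c), wI u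
  let B : ℕ := ∑ u ∈ Finset.univ.filter (· ∉ C), wI u
  have hSB : ∀ c, S c ≤ B := fun c =>
    Finset.sum_le_sum_of_subset fun u => by simp only [Finset.mem_filter]; tauto
  have hS_lt : ∀ c v, v ∉ C → T.Adj v c → S c < wI v := by
    intro c v hv hvc
    refine sum_pow_lt_pow_of_card_lt _ _ (Nat.lt_succ_of_le (Finset.card_le_univ _)) ?_
    intro u hu
    obtain ⟨hu, huc⟩ := (Finset.mem_filter.1 hu).2
    have hsub : T.neighborSet u ⊆ T.neighborSet v :=
      (hnest u hu v hv).resolve_right fun h => huc (h hvc)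
    exact T.degree_lt_degree_of_neighborSet_ssubset
      (hsub.ssubset_of_not_subset fun h => huc (h hvc))
  refine isThresholdGraph_of_weights T (fun v => if v ∈ C then 2 * B + 1 - S v else wI v)
    (2 * B + 1) (fun a b hab => ?_) (fun U hU => ?_)
  · by_cases ha : a ∈ C <;> by_cases hb : b ∈ C <;> simp only [ha, hb, if_true, if_false]
    · have := hSB a; have := hSB b; omega
    · have := hS_lt a b hb hab.symm; have := hSB a; omega
    · have := hS_lt b a ha hab; have := hSB b; omega
    · exact absurd hab (hI a ha b hb)
  · by_cases hUC : ∃ c ∈ U, c ∈ C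
    · obtain ⟨c, hcU, hcC⟩ := hUC
      have hrest : ∀ u ∈ U.erase c, u ∉ C ∧ ¬ T.Adj u c := fun u hu => by
        obtain ⟨huc, huU⟩ := Finset.mem_erase.1 hu
        have hnadj : ¬ T.Adj u c := hU huU hcU huc
        exact ⟨fun huC => hnadj (hC huC hcC huc), hnadj⟩
      have hsum : ∑ u ∈ U.erase c, (if u ∈ C then 2 * B + 1 - S u else wI u) ≤ S c := by
        rw [Finset.sum_congr rfl fun u hu => if_neg (hrest u hu).1]
        exact Finset.sum_le_sum_of_subset fun u hu =>
          Finset.mem_filter.2 ⟨Finset.mem_univ u, hrest u hu⟩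
      rw [← Finset.add_sum_erase U _ hcU, if_pos hcC]
      have := hSB c
      omega
    · push Not at hUC
      rw [Finset.sum_congr rfl fun u hu => if_neg (hUC u hu)]
      calc ∑ u ∈ U, wI u ≤ B :=
            Finset.sum_le_sum_of_subset fun u hu =>
              Finset.mem_filter.2 ⟨Finset.mem_univ u, hUC u hu⟩
        _ ≤ 2 * B + 1 := by omega

lemma thresholdDim_le_card {G : SimpleGraph V} {ι : Type*} [Fintype ι] (T : ι → SimpleGraph V)
    (hT : ∀ i, IsThresholdGraph (T i)) (hcover : ⨆ i, T i = G) :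
    thresholdDim G ≤ Fintype.card ι := by
  refine Nat.sInf_le ⟨fun k => T ((Fintype.equivFin ι).symm k), fun k => hT _, ?_⟩
  rw [← hcover, SimpleGraph.edgeSet_iSup]
  exact (Fintype.equivFin ι).symm.surjective.iUnion_comp fun i => (T i).edgeSet

end Threshold

section Alpha

variable {V : Type*} [Fintype V] {G : SimpleGraph V}

lemma bddAbove_stableSet_cards :
    BddAbove {k | ∃ s : Finset V, s.card = k ∧ IsStableSet G ↑s} :=
  ⟨Fintype.card V, by rintro k ⟨s, rfl, _⟩; exact s.card_le_univ⟩

lemma card_le_alphaNum {s : Finset V} (hs : IsStableSet G ↑s) : s.card ≤ alphaNum G :=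
  le_csSup bddAbove_stableSet_cards ⟨s, rfl, hs⟩

lemma exists_isStableSet_card_eq_alphaNum :
    ∃ s : Finset V, s.card = alphaNum G ∧ IsStableSet G ↑s :=
  Nat.sSup_mem (by exact ⟨0, ∅, rfl, by simp [IsStableSet]⟩) bddAbove_stableSet_cards

end Alpha

section Star

variable {V : Type*}

def starGraph (G : SimpleGraph V) (v : V) : SimpleGraph V where
  Adj a b := G.Adj a b ∧ (a = v ∨ b = v)
  symm := ⟨fun _ _ h => ⟨h.1.symm, h.2.symm⟩⟩
  loopless := ⟨fun _ h => G.irrefl h.1⟩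

@[simp]
lemma starGraph_adj {G : SimpleGraph V} {v a b : V} :
    (starGraph G v).Adj a b ↔ G.Adj a b ∧ (a = v ∨ b = v) :=
  Iff.rfl

lemma isThresholdGraph_starGraph [Fintype V] (G : SimpleGraph V) (v : V) :
    IsThresholdGraph (starGraph G v) := by
  have hcenter : ∀ {u c}, u ≠ v → (starGraph G v).Adj u c → c = v := fun hu h =>
    (starGraph_adj.1 h).2.resolve_left hu
  refine isThresholdGraph_of_nested _ {v} (SimpleGraph.isClique_singleton v)
    (fun u hu w hw h => (starGraph_adj.1 h).2.elim hu hw) fun u hu w hw => ?_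
  by_cases hwv : (starGraph G v).Adj w v
  · exact Or.inl fun c hc => hcenter hu hc ▸ hwv
  · exact Or.inr fun c hc => absurd (hcenter hw hc ▸ hc) hwv

theorem thresholdDim_le_card_sub_alphaNum [Fintype V] (G : SimpleGraph V) :
    thresholdDim G ≤ Fintype.card V - alphaNum G := by
  classical
  obtain ⟨S, hcard, hS⟩ := exists_isStableSet_card_eq_alphaNum (G := G)
  calc thresholdDim G ≤ Fintype.card (Sᶜ : Finset V) :=
        thresholdDim_le_card (fun v => starGraph G v) (fun v => isThresholdGraph_starGraph G v) ?_
    _ = Fintype.card V - alphaNum G := by rw [Fintype.card_coe, Finset.card_compl, hcard]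
  ext a b
  rw [SimpleGraph.iSup_adj]
  refine ⟨fun ⟨_, h⟩ => (starGraph_adj.1 h).1, fun hab => ?_⟩
  by_cases ha : a ∈ S
  · have hb : b ∉ S := fun hb => hS ha hb hab.ne hab
    exact ⟨⟨b, Finset.mem_compl.2 hb⟩, hab, Or.inr rfl⟩
  · exact ⟨⟨a, Finset.mem_compl.2 ha⟩, hab, Or.inl rfl⟩

end Star

section Dominance

variable {V α : Type*} [LinearOrder α]

def levelGraph (x y : V → α) (L : Set V) : SimpleGraph V :=
  SimpleGraph.fromRel fun a b => a ∈ L ∧ (b ∈ L ∨ x a < x b ∧ y b < y a)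

lemma levelGraph_adj_of_notMem {x y : V → α} {L : Set V} {u c : V} (hu : u ∉ L) :
    (levelGraph x y L).Adj u c ↔ c ∈ L ∧ x c < x u ∧ y u < y c := by
  simp only [levelGraph, SimpleGraph.fromRel_adj]
  refine ⟨fun h => ?_, fun h => ⟨fun huc => hu (huc ▸ h.1), Or.inr ⟨h.1, Or.inr h.2⟩⟩⟩
  rcases h.2 with h | ⟨hc, h | h⟩
  · exact absurd h.1 hu
  · exact absurd h hu
  · exact ⟨hc, h⟩

lemma isThresholdGraph_levelGraph [Fintype V] (x y : V → α) (L : Set V)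
    (hL : ∀ c ∈ L, ∀ c' ∈ L, x c < x c' → y c' < y c) :
    IsThresholdGraph (levelGraph x y L) := by
  refine isThresholdGraph_of_nested _ L (fun a ha b hb hab => ⟨hab, Or.inl ⟨ha, Or.inl hb⟩⟩)
    (fun u hu v hv huv => ?_) fun u hu v hv => ?_
  · obtain ⟨hv', -⟩ := (levelGraph_adj_of_notMem hu).1 huv
    exact hv hv'
  · by_contra! h
    obtain ⟨c, hcu, hcv⟩ := Set.not_subset.1 h.1
    obtain ⟨c', hcv', hcu'⟩ := Set.not_subset.1 h.2
    simp only [SimpleGraph.mem_neighborSet, levelGraph_adj_of_notMem hu,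
      levelGraph_adj_of_notMem hv, not_and, not_lt] at hcu hcv hcv' hcu'
    rcases lt_trichotomy (x c) (x c') with hx | hx | hx
    · have := hL c hcu.1 c' hcv'.1 hx
      have := hcv hcu.1 (by order)
      order
    · have := hcv hcu.1 (by order)
      have := hcu' hcv'.1 (by order)
      order
    · have := hL c' hcv'.1 c hcu.1 hx
      have := hcu' hcv'.1 (by order)
      order

variable [Fintype V] {G : SimpleGraph V} {x y : V → α}

noncomputable def dominanceHeight (G : SimpleGraph V) (x y : V → α) (a : V) : ℕ :=
  sSup {k | ∃ s : Finset V, s.card = k ∧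
    (∀ w ∈ s, x w ≤ x a ∧ y w ≤ y a) ∧ IsStableSet G ↑s}

lemma bddAbove_dominanceHeight_cards (a : V) : BddAbove {k | ∃ s : Finset V, s.card = k ∧
    (∀ w ∈ s, x w ≤ x a ∧ y w ≤ y a) ∧ IsStableSet G ↑s} :=
  ⟨Fintype.card V, by rintro k ⟨s, rfl, _⟩; exact s.card_le_univ⟩

lemma card_le_dominanceHeight {a : V} {s : Finset V} (hs : ∀ w ∈ s, x w ≤ x a ∧ y w ≤ y a)
    (hst : IsStableSet G ↑s) : s.card ≤ dominanceHeight G x y a :=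
  le_csSup (bddAbove_dominanceHeight_cards a) ⟨s, rfl, hs, hst⟩

lemma exists_card_eq_dominanceHeight (a : V) :
    ∃ s : Finset V, s.card = dominanceHeight G x y a ∧
      (∀ w ∈ s, x w ≤ x a ∧ y w ≤ y a) ∧ IsStableSet G ↑s :=
  Nat.sSup_mem (by exact ⟨0, ∅, rfl, by simp, by simp [IsStableSet]⟩)
    (bddAbove_dominanceHeight_cards a)

lemma one_le_dominanceHeight (a : V) : 1 ≤ dominanceHeight G x y a :=
  card_le_dominanceHeight (s := {a}) (by simp) (by simp [IsStableSet])

lemma dominanceHeight_le_alphaNum (a : V) : dominanceHeight G x y a ≤ alphaNum G := by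
  obtain ⟨s, hcard, -, hst⟩ := exists_card_eq_dominanceHeight (G := G) (x := x) (y := y) a
  exact hcard ▸ card_le_alphaNum hst

lemma dominanceHeight_lt
    (hAdj : ∀ a b, G.Adj a b → (x a < x b ∧ y b < y a) ∨ (x b < x a ∧ y a < y b))
    {a b : V} (hx : x a < x b) (hy : y a < y b) :
    dominanceHeight G x y a < dominanceHeight G x y b := by
  classical
  obtain ⟨s, hcard, hs, hst⟩ := exists_card_eq_dominanceHeight (G := G) (x := x) (y := y) a
  have hbs : b ∉ s := fun hb => (hs b hb).1.not_gt hx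
  have hlt : ∀ w ∈ s, x w < x b ∧ y w < y b := fun w hw =>
    ⟨(hs w hw).1.trans_lt hx, (hs w hw).2.trans_lt hy⟩
  have hins := card_le_dominanceHeight (G := G) (x := x) (y := y) (s := insert b s) (a := b)
    (Finset.forall_mem_insert _ _ _ |>.2 ⟨⟨le_rfl, le_rfl⟩, fun w hw =>
      ⟨(hlt w hw).1.le, (hlt w hw).2.le⟩⟩) <| by
      rw [Finset.coe_insert]
      refine Set.pairwise_insert.2 ⟨hst, fun w hw _ => ?_⟩
      have := hlt w hw
      constructor <;> intro hbw <;> rcases hAdj _ _ hbw with h | h <;> order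
  rw [Finset.card_insert_of_notMem hbs, hcard] at hins
  omega

lemma adj_of_dominanceHeight_eq
    (hAdj : ∀ a b, G.Adj a b ↔ (x a < x b ∧ y b < y a) ∨ (x b < x a ∧ y a < y b))
    (hx : Function.Injective x) (hy : Function.Injective y) {a b : V} (hne : a ≠ b)
    (h : dominanceHeight G x y a = dominanceHeight G x y b) : G.Adj a b := by
  by_contra hnadj
  rw [hAdj, not_or, not_and, not_and, not_lt, not_lt] at hnadj
  rcases (hx.ne hne).lt_or_gt with hxab | hxab
  · have := dominanceHeight_lt (fun a b => (hAdj a b).1) hxab ((hy.ne hne).lt_of_le (hnadj.1 hxab))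
    omega
  · have := dominanceHeight_lt (fun a b => (hAdj a b).1) hxab ((hy.ne hne).symm.lt_of_le (hnadj.2 hxab))
    omega

theorem thresholdDim_le_alphaNum
    (hAdj : ∀ a b, G.Adj a b ↔ (x a < x b ∧ y b < y a) ∨ (x b < x a ∧ y a < y b))
    (hx : Function.Injective x) (hy : Function.Injective y) :
    thresholdDim G ≤ alphaNum G := by
  let level (k : Fin (alphaNum G)) : Set V := {v | dominanceHeight G x y v = k + 1}
  have hlevel (a : V) : ∃ k, a ∈ level k := by
    have h1 := one_le_dominanceHeight (G := G) (x := x) (y := y) a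
    have h2 := dominanceHeight_le_alphaNum (G := G) (x := x) (y := y) a
    exact ⟨⟨dominanceHeight G x y a - 1, by omega⟩, (Nat.sub_add_cancel h1).symm⟩
  calc thresholdDim G ≤ Fintype.card (Fin (alphaNum G)) :=
        thresholdDim_le_card (fun k => levelGraph x y (level k)) (fun k => ?_) ?_
    _ = alphaNum G := Fintype.card_fin _
  · refine isThresholdGraph_levelGraph x y _ fun c hc c' hc' hxc => ?_
    have hadj := adj_of_dominanceHeight_eq hAdj hx hy (ne_of_apply_ne x hxc.ne)
      (hc.trans hc'.symm)
    rcases (hAdj c c').1 hadj with h | h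
    · exact h.2
    · order
  ext a b
  simp only [SimpleGraph.iSup_adj, levelGraph, SimpleGraph.fromRel_adj]
  constructor
  · rintro ⟨k, hne, ⟨ha, hb | h⟩ | ⟨hb, ha | h⟩⟩
    · exact adj_of_dominanceHeight_eq hAdj hx hy hne (ha.trans hb.symm)
    · exact (hAdj a b).2 (Or.inl h)
    · exact adj_of_dominanceHeight_eq hAdj hx hy hne (ha.trans hb.symm)
    · exact (hAdj a b).2 (Or.inr h)
  · intro hab
    rcases (hAdj a b).1 hab with h | h
    · obtain ⟨k, hk⟩ := hlevel a
      exact ⟨k, hab.ne, Or.inl ⟨hk, Or.inr h⟩⟩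
    · obtain ⟨k, hk⟩ := hlevel b
      exact ⟨k, hab.ne, Or.inr ⟨hk, Or.inr h⟩⟩

end Dominance

lemma permGraph_adj_iff {n : ℕ} (π : Equiv.Perm (Fin n)) (i j : Fin n) :
    (permGraph n π).Adj i j ↔
      (i < j ∧ π.symm j < π.symm i) ∨ (j < i ∧ π.symm i < π.symm j) := by
  change ((i : ℤ) - j) * ((π.symm i : ℤ) - π.symm j) < 0 ↔ _
  rw [mul_neg_iff, sub_pos, sub_neg, sub_pos, sub_neg, Fin.lt_def, Fin.lt_def, Fin.lt_def,
    Fin.lt_def]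
  omega

/-- If `G` is a permutation graph on `n` vertices then `t(G) ≤ min (α(G), n - α(G))`. -/
theorem thresholdDim_le_min
    {V : Type*} [Fintype V] (G : SimpleGraph V)
    (hG : IsPermutationGraph G) :
    thresholdDim G ≤ min (alphaNum G) (Fintype.card V - alphaNum G) := by
  obtain ⟨n, π, ⟨e⟩⟩ := hG
  refine le_min ?_ (thresholdDim_le_card_sub_alphaNum G)
  refine thresholdDim_le_alphaNum (x := e) (y := π.symm ∘ e) (fun a b => ?_) e.injective
    (π.symm.injective.comp e.injective)
  rw [← e.map_adj_iff, permGraph_adj_iff]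
  rfl
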